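/- Consider the EDMC dynamics on a connected graph G with diameter δ, and let Δ ≥ δ. If x satisfies the EDMC update with Δ + 1 levels, then for every k ≥ Δ + 1 and every vertex i ∈ V, the top-level state equals the (Δ+1)-delayed global maximum of the inputs: x_k(i, Δ) = ū_{k−Δ−1}, where ū_m = max_{j∈V} u_m(j). -/

import Mathlib

/-!
At level `ℓ` the EDMC state of vertex `i` is the maximum, over the closed graph ball of radius `ℓ`
around `i`, of the input injected `ℓ + 1` steps earlier: one round of neighbourhood maxima turns
radius-`ℓ` ball maxima into radius-`(ℓ + 1)` ball maxima, because a vertex at distance at most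
`ℓ + 1` from `i` is at distance at most `ℓ` from `i` or from a neighbour of `i`. Once `ℓ` reaches
the diameter, the ball is the whole vertex set.
-/

open Finset

namespace SimpleGraph

variable {V : Type*} {G : SimpleGraph V}

theorem Connected.dist_le_succ_iff (hG : G.Connected) {i j : V} {r : ℕ} :
    G.dist i j ≤ r + 1 ↔ ∃ k, (k = i ∨ G.Adj i k) ∧ G.dist k j ≤ r := by
  constructor
  · intro hij
    by_cases h0 : G.dist i j = 0
    · exact ⟨i, Or.inl rfl, by omega⟩
    obtain ⟨p, hp⟩ := hG.exists_walk_length_eq_dist i j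
    cases p with
    | nil => exact absurd dist_self h0
    | @cons _ k _ hadj q =>
      rw [Walk.length_cons] at hp
      exact ⟨k, Or.inr hadj, (dist_le q).trans (by omega)⟩
  · rintro ⟨k, rfl | hadj, hk⟩
    · omega
    · calc G.dist i j ≤ G.dist i k + G.dist k j := hG.dist_triangle
        _ ≤ r + 1 := by rw [dist_eq_one_iff_adj.mpr hadj]; omega

variable [Fintype V]

variable (G) in
noncomputable def closedBall (i : V) (r : ℕ) : Finset V := {j | G.dist i j ≤ r}

@[simp]
theorem mem_closedBall {i j : V} {r : ℕ} : j ∈ G.closedBall i r ↔ G.dist i j ≤ r := by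
  simp [closedBall]

theorem closedBall_nonempty (i : V) (r : ℕ) : (G.closedBall i r).Nonempty :=
  ⟨i, by simp⟩

theorem Connected.closedBall_zero (hG : G.Connected) (i : V) : G.closedBall i 0 = {i} := by
  ext j
  simp [hG.dist_eq_zero_iff, eq_comm]

theorem Connected.closedBall_succ [DecidableEq V] [DecidableRel G.Adj] (hG : G.Connected)
    (i : V) (r : ℕ) :
    G.closedBall i (r + 1) = (insert i (G.neighborFinset i)).biUnion (G.closedBall · r) := by
  ext j
  simp [hG.dist_le_succ_iff]

theorem closedBall_eq_univ {i : V} {r : ℕ} (hr : univ.sup (fun p : V × V => G.dist p.1 p.2) ≤ r) :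
    G.closedBall i r = univ :=
  eq_univ_of_forall fun j =>
    mem_closedBall.mpr <| (le_sup (f := fun p : V × V => G.dist p.1 p.2) (mem_univ (i, j))).trans hr

end SimpleGraph

open SimpleGraph

theorem edmc_level_eq_sup_closedBall
    {V : Type*} [Fintype V] [DecidableEq V]
    {G : SimpleGraph V} [DecidableRel G.Adj] (hconn : G.Connected)
    {Δ : ℕ} {u : ℕ → V → ℝ} {x : ℕ → V → Fin (Δ + 1) → ℝ}
    (hx0 : ∀ k i, x (k + 1) i 0 = u k i)
    (hx : ∀ k i (ℓ : Fin Δ), x (k + 1) i ℓ.succ =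
      (insert i (G.neighborFinset i)).sup' (insert_nonempty i _)
        (fun j => x k j ℓ.castSucc))
    (ℓ : Fin (Δ + 1)) (k : ℕ) (i : V) :
    x (k + ℓ + 1) i ℓ = (G.closedBall i ℓ).sup' (closedBall_nonempty i ℓ) (u k) := by
  induction ℓ using Fin.induction generalizing i with
  | zero => simp [hx0, hconn.closedBall_zero]
  | succ ℓ ih =>
    simp only [Fin.val_castSucc] at ih
    calc x (k + ℓ.succ + 1) i ℓ.succ
        = (insert i (G.neighborFinset i)).sup' (insert_nonempty i _)
            (fun j => (G.closedBall j ℓ).sup' (closedBall_nonempty j ℓ) (u k)) := by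
          rw [Fin.val_succ, ← add_assoc, hx]
          exact sup'_congr _ rfl fun j _ => ih j
      _ = (G.closedBall i ℓ.succ).sup' (closedBall_nonempty i _) (u k) := by
          rw [← sup'_biUnion _ _ (closedBall_nonempty · _)]
          exact sup'_congr _ (hconn.closedBall_succ i ℓ).symm fun _ _ => rfl

/-- Under the EDMC update on a connected graph with diameter δ ≤ Δ, for k ≥ Δ+1
the top-level state equals the (Δ+1)-delayed global maximum of the inputs. -/
theorem edmc_top_level_eq_delayed_max
    {V : Type*} [Fintype V] [Nonempty V] [DecidableEq V]
    (G : SimpleGraph V) [DecidableRel G.Adj] (hconn : G.Connected)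
    (δ : ℕ) (hδ : δ = Finset.univ.sup fun p : V × V => G.dist p.1 p.2)
    (Δ : ℕ) (hΔ : δ ≤ Δ)
    (u : ℕ → V → ℝ)
    (x : ℕ → V → Fin (Δ + 1) → ℝ)
    (hx0 : ∀ k i, x (k + 1) i 0 = u k i)
    (hx : ∀ k i (ℓ : Fin Δ), x (k + 1) i ℓ.succ =
      (insert i (G.neighborFinset i)).sup' (insert_nonempty i _)
        (fun j => x k j ℓ.castSucc)) :
    ∀ k, Δ + 1 ≤ k → ∀ i : V,
      x k i (Fin.last Δ) = Finset.univ.sup' univ_nonempty (u (k - Δ - 1)) := by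
  intro k hk i
  obtain ⟨m, rfl⟩ : ∃ m, k = m + Δ + 1 := ⟨k - Δ - 1, by omega⟩
  have hball : G.closedBall i Δ = univ := closedBall_eq_univ (hδ ▸ hΔ)
  rw [show m + Δ + 1 - Δ - 1 = m by omega]
  calc x (m + Δ + 1) i (Fin.last Δ)
      = (G.closedBall i Δ).sup' (closedBall_nonempty i Δ) (u m) :=
        edmc_level_eq_sup_closedBall hconn hx0 hx (Fin.last Δ) m i
    _ = univ.sup' univ_nonempty (u m) := sup'_congr _ hball fun _ _ => rfl
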